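/- If a no-signaling strategy for the N-player GYNI game (with the parity promise on inputs) achieves winning probability ω, then there is a no-signaling strategy for the (N+1)-player game achieving winning probability ω/2; since ω_c(N+1) = ω_c(N)/2, the ratio ω/ω_c is non-decreasing in N. -/

import Mathlib

/-- A no-signaling box on `n` parties with binary inputs and outputs. -/
def NoSignaling {n : ℕ} (P : (Fin n → Bool) → (Fin n → Bool) → ℝ) : Prop :=
  ∀ (j : Fin n) (x x' : Fin n → Bool), (∀ i, i ≠ j → x i = x' i) →
    ∀ a : Fin n → Bool,
      ∑ b : Bool, P x (Function.update a j b) = ∑ b : Bool, P x' (Function.update a j b)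

/-- The parity promise on inputs: `x 1 ⊕ ⋯ ⊕ x n̂ = 0`, where `n̂ = n` for odd
`n` and `n̂ = n - 1` for even `n`. -/
def GyniPromise {n : ℕ} (x : Fin n → Bool) : Prop :=
  (Finset.univ.filter fun i : Fin n =>
      (i : ℕ) < (if n % 2 = 1 then n else n - 1) ∧ x i = true).card % 2 = 0


instance {n : ℕ} (x : Fin n → Bool) : Decidable (GyniPromise x) := by
  unfold GyniPromise; infer_instance
/-- The GYNI winning probability of a box, with inputs uniformly distributed
(with weight `1/2^{n-1}`) over the strings satisfying the parity promise. -/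
noncomputable def gyniScore {n : ℕ} [NeZero n]
    (P : (Fin n → Bool) → (Fin n → Bool) → ℝ) : ℝ :=
  ∑ x : Fin n → Bool,
    (if GyniPromise x then (1 / 2 ^ (n - 1) : ℝ) else 0) * P x (fun i => x (i + 1))

/-!
The new player outputs its own input, which is correct exactly when `x (N+1) = x 1`, i.e. on
half of the promised inputs. On those inputs the `(N+1)`-player string closes up into an
`N`-player cycle, the winning condition of the first `N` players is that of the `N`-player game,
and the `(N+1)`-player parity promise becomes the `N`-player one (the two copies of `x 1` cancel
when `N + 1` is odd). A product of a no-signaling box with a one-party box is no-signaling.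
-/

open Finset

section Boxes

variable {n : ℕ}

def relabel (σ : Equiv.Perm (Fin n)) (P : (Fin n → Bool) → (Fin n → Bool) → ℝ) :
    (Fin n → Bool) → (Fin n → Bool) → ℝ :=
  fun x a => P (x ∘ σ) (a ∘ σ)

def snocBox (Q : (Fin n → Bool) → (Fin n → Bool) → ℝ) (R : Bool → Bool → ℝ) :
    (Fin (n + 1) → Bool) → (Fin (n + 1) → Bool) → ℝ :=
  fun x a => Q (Fin.init x) (Fin.init a) * R (x (Fin.last n)) (a (Fin.last n))

theorem sum_relabel (σ : Equiv.Perm (Fin n)) (P : (Fin n → Bool) → (Fin n → Bool) → ℝ)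
    (x : Fin n → Bool) : ∑ a, relabel σ P x a = ∑ a, P (x ∘ σ) a :=
  (σ.arrowCongr (Equiv.refl Bool)).symm.sum_comp (P (x ∘ σ))

theorem sum_fun_eq_sum_sum_snoc {α M : Type*} [Fintype α] [AddCommMonoid M]
    (F : (Fin (n + 1) → α) → M) :
    ∑ x, F x = ∑ y : Fin n → α, ∑ b : α, F (Fin.snoc y b) := by
  rw [← (Fin.snocEquiv fun _ => α).sum_comp, Fintype.sum_prod_type_right]
  rfl

theorem sum_snocBox (Q : (Fin n → Bool) → (Fin n → Bool) → ℝ) (R : Bool → Bool → ℝ)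
    (x : Fin (n + 1) → Bool) :
    ∑ a, snocBox Q R x a = (∑ a, Q (Fin.init x) a) * ∑ b, R (x (Fin.last n)) b := by
  simp only [sum_fun_eq_sum_sum_snoc, snocBox, Fin.init_snoc, Fin.snoc_last, sum_mul_sum]

theorem NoSignaling.relabel {P : (Fin n → Bool) → (Fin n → Bool) → ℝ} (hP : NoSignaling P)
    (σ : Equiv.Perm (Fin n)) : NoSignaling (relabel σ P) := by
  intro j x x' hxx' a
  have hσ : ∀ i, i ≠ σ.symm j → (x ∘ σ) i = (x' ∘ σ) i := fun i hi =>
    hxx' (σ i) fun h => hi (σ.eq_symm_apply.mpr h)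
  simpa only [_root_.relabel, Function.update_comp_equiv] using hP _ _ _ hσ (a ∘ σ)

theorem NoSignaling.snocBox {Q : (Fin n → Bool) → (Fin n → Bool) → ℝ} (hQ : NoSignaling Q)
    {R : Bool → Bool → ℝ} (hR : ∀ c, ∑ b, R c b = 1) : NoSignaling (snocBox Q R) := by
  intro j x x' hxx' a
  induction j using Fin.lastCases with
  | last =>
    have hinit : Fin.init x = Fin.init x' :=
      funext fun i => hxx' _ (Fin.castSucc_lt_last i).ne
    simp only [_root_.snocBox, Fin.init_update_last, Function.update_self, ← mul_sum,
      hR, hinit]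
  | cast j =>
    have hlast : x (Fin.last n) = x' (Fin.last n) := hxx' _ (Fin.castSucc_lt_last j).ne'
    have hinit : ∀ i, i ≠ j → Fin.init x i = Fin.init x' i := fun i hi =>
      hxx' _ (Fin.castSucc_injective n |>.ne hi)
    simp only [_root_.snocBox, Fin.init_update_castSucc,
      Function.update_of_ne (Fin.castSucc_lt_last j).ne', ← sum_mul, hlast,
      hQ j _ _ hinit]

end Boxes

section Promise

variable {n : ℕ}

theorem card_filter_snoc (y : Fin n → Bool) (b : Bool) :
    #{i | Fin.snoc (α := fun _ => Bool) y b i = true} = #{i | y i = true} + if b then 1 else 0 := by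
  simp only [card_filter, Fin.sum_univ_castSucc, Fin.snoc_castSucc, Fin.snoc_last]

theorem card_filter_comp_perm (y : Fin n → Bool) (σ : Equiv.Perm (Fin n)) :
    #{i | y (σ i) = true} = #{i | y i = true} := by
  simp only [card_filter]
  exact Equiv.sum_comp σ fun i => if y i = true then 1 else 0

theorem gyniPromise_iff_card_filter (y : Fin (n + 1) → Bool) :
    GyniPromise y ↔
      (#{i | y i = true} + if n % 2 = 1 ∧ y (Fin.last n) = true then 1 else 0) % 2 = 0 := by
  have hinit (m : ℕ) (hm : n ≤ m) :
      (∑ i : Fin n, if (i : ℕ) < m ∧ Fin.init y i = true then 1 else 0) =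
        ∑ i, if Fin.init y i = true then 1 else 0 :=
    sum_congr rfl fun i _ => by simp only [i.is_lt.trans_le hm, true_and]
  rw [GyniPromise, ← Fin.snoc_init_self y, card_filter_snoc, card_filter, card_filter,
    Fin.sum_univ_castSucc]
  simp only [Fin.snoc_castSucc, Fin.snoc_last, Fin.val_castSucc, Fin.val_last]
  rcases Nat.mod_two_eq_zero_or_one n with h | h
  · rw [if_pos (by omega), hinit _ (by omega)]
    cases y (Fin.last n) <;> simp [h]
  · rw [if_neg (by omega), Nat.add_sub_cancel, hinit _ le_rfl]
    cases y (Fin.last n) <;> simp [h, add_assoc]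

end Promise

section Extension

variable {M : ℕ}

theorem gyniPromise_snoc_head_iff (y : Fin (M + 1) → Bool) :
    GyniPromise (Fin.snoc (α := fun _ => Bool) y (y 0)) ↔ GyniPromise fun j => y (j + 1) := by
  have hrot : #{i | y (i + 1) = true} = #{i | y i = true} :=
    card_filter_comp_perm y (Equiv.addRight 1)
  rw [gyniPromise_iff_card_filter, gyniPromise_iff_card_filter, card_filter_snoc, hrot]
  simp only [Fin.snoc_last, Fin.last_add_one]
  cases y 0
  · simp
  · simp only [and_true, if_true]
    split_ifs <;> omega

theorem init_shift_snoc_head (y : Fin (M + 1) → Bool) :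
    Fin.init (fun i => Fin.snoc (α := fun _ => Bool) y (y 0) (i + 1)) = fun j => y (j + 1) := by
  funext j
  induction j using Fin.lastCases with
  | last => simp [Fin.init, Fin.last_add_one]
  | cast k =>
    simp only [Fin.init, Fin.coeSucc_eq_succ]
    rw [Fin.succ_castSucc, Fin.snoc_castSucc]

def copyBox : Bool → Bool → ℝ := fun c d => if c = d then 1 else 0

theorem sum_copyBox (c : Bool) : ∑ d, copyBox c d = 1 := by
  simp [copyBox]

/-- The old box is wired to the players through the cyclic shift `j ↦ j + 1`: this is what makes
the two parity promises coincide when `N` is even, since the `N`-player promise then omits the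
last old player, who under the shift reads `x 1`. -/
def extBox (P : (Fin (M + 1) → Bool) → (Fin (M + 1) → Bool) → ℝ) :
    (Fin (M + 2) → Bool) → (Fin (M + 2) → Bool) → ℝ :=
  snocBox (relabel (Equiv.addRight 1) P) copyBox

theorem extBox_snoc_shift (P : (Fin (M + 1) → Bool) → (Fin (M + 1) → Bool) → ℝ)
    (y : Fin (M + 1) → Bool) (b : Bool) :
    extBox P (Fin.snoc y b) (fun i => Fin.snoc (α := fun _ => Bool) y b (i + 1)) =
      if b = y 0 then P (fun j => y (j + 1)) (fun j => y (j + 1 + 1)) else 0 := by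
  simp only [extBox, snocBox, relabel, copyBox, Fin.init_snoc, Fin.snoc_last, Fin.last_add_one,
    Fin.snoc_apply_zero]
  split_ifs with hb
  · subst hb
    rw [init_shift_snoc_head, mul_one]
    rfl
  · exact mul_zero _

theorem gyniScore_extBox (P : (Fin (M + 1) → Bool) → (Fin (M + 1) → Bool) → ℝ) :
    gyniScore (extBox P) = gyniScore P / 2 := by
  set w : (Fin (M + 1) → Bool) → ℝ := fun z => if GyniPromise z then 1 / 2 ^ (M + 1 - 1) else 0
  have hw (y : Fin (M + 1) → Bool) :
      (if GyniPromise (Fin.snoc (α := fun _ => Bool) y (y 0)) then (1 / 2 ^ (M + 2 - 1) : ℝ)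
        else 0) = w (fun j => y (j + 1)) / 2 := by
    simp only [w, gyniPromise_snoc_head_iff, Nat.add_succ_sub_one]
    split_ifs
    · rw [pow_succ]
      ring
    · simp
  calc gyniScore (extBox P)
      = ∑ y : Fin (M + 1) → Bool,
          w (fun j => y (j + 1)) * P (fun j => y (j + 1)) (fun j => y (j + 1 + 1)) / 2 := by
        rw [gyniScore, sum_fun_eq_sum_sum_snoc]
        refine sum_congr rfl fun y _ => ?_
        rw [Fintype.sum_congr _ _ fun b => by rw [extBox_snoc_shift, mul_ite, mul_zero],
          Fintype.sum_ite_eq', hw, div_mul_eq_mul_div]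
    _ = gyniScore P / 2 := by
        rw [gyniScore, sum_div]
        exact ((Equiv.addRight 1).symm.arrowCongr (Equiv.refl Bool)).sum_comp
          fun z => w z * P z (fun j => z (j + 1)) / 2

end Extension

/-- From any no-signaling strategy for the `N`-player GYNI game with the parity
promise achieving winning probability `ω`, one obtains a no-signaling strategy
for the `(N+1)`-player game achieving winning probability `ω/2`; since
`ω_c(N+1) = ω_c(N)/2 = 2^{-N}`, the ratio `ω/ω_c` is preserved. -/
theorem gyni_ns_extension (N : ℕ) [NeZero N]
    (P : (Fin N → Bool) → (Fin N → Bool) → ℝ)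
    (hpos : ∀ x a, 0 ≤ P x a)
    (hnorm : ∀ x, ∑ a : Fin N → Bool, P x a = 1)
    (hns : NoSignaling P) :
    ∃ P' : (Fin (N + 1) → Bool) → (Fin (N + 1) → Bool) → ℝ,
      (∀ x a, 0 ≤ P' x a) ∧ (∀ x, ∑ a : Fin (N + 1) → Bool, P' x a = 1) ∧
      NoSignaling P' ∧
      gyniScore P' = gyniScore P / 2 ∧
      gyniScore P' / (1 / 2 ^ N : ℝ) = gyniScore P / (1 / 2 ^ (N - 1) : ℝ) := by
  obtain ⟨M, rfl⟩ := Nat.exists_eq_add_one_of_ne_zero (NeZero.ne N)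
  have hscore := gyniScore_extBox P
  refine ⟨extBox P, fun x a => ?_, fun x => ?_, (hns.relabel _).snocBox sum_copyBox, hscore, ?_⟩
  · exact mul_nonneg (hpos _ _) (by unfold copyBox; positivity)
  · rw [extBox, sum_snocBox, sum_relabel, hnorm, sum_copyBox, one_mul]
  · rw [hscore, Nat.add_sub_cancel, pow_succ]
    field_simp
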